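/- Let d ≥ 1, P ≥ 1, m_1, …, m_P > 0 and ν_1, …, ν_P ∈ ℕ. For every tempered distribution u ∈ 𝒮'(ℝ^d; ℂ) there exists a unique tempered distribution φ ∈ 𝒮'(ℝ^d; ℂ) such that φ(∏_{l=1}^{P}(−Δ + m_l²)^{ν_l} f) = u(f) for every Schwartz function f ∈ 𝒮(ℝ^d; ℂ); that is, the equation ∏_{l=1}^{P}(−Δ + m_l²)^{ν_l} φ = u has a unique solution in tempered distributions. -/

import Mathlib

open scoped BigOperators

/-- The partial derivative `∂_i g` of a function on `ℝ^d`. -/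
noncomputable def pderiv {d : ℕ} (i : Fin d) (g : EuclideanSpace ℝ (Fin d) → ℂ) :
    EuclideanSpace ℝ (Fin d) → ℂ :=
  fun x => fderiv ℝ g x (EuclideanSpace.single i (1 : ℝ))

/-- The Laplacian `Δ g = ∑ i ∂_i² g` on `ℝ^d`. -/
noncomputable def laplacian {d : ℕ} (g : EuclideanSpace ℝ (Fin d) → ℂ) :
    EuclideanSpace ℝ (Fin d) → ℂ :=
  fun x => ∑ i, pderiv i (pderiv i g) x

/-- The Klein–Gordon type operator `−Δ + m²`. -/
noncomputable def kleinGordonOp {d : ℕ} (m : ℝ) (g : EuclideanSpace ℝ (Fin d) → ℂ) :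
    EuclideanSpace ℝ (Fin d) → ℂ :=
  fun x => -laplacian g x + (m : ℂ) ^ 2 * g x

/-- The constant-coefficient operator `∏_l (−Δ + m_l²)^{ν_l}` (composition of the operators
`−Δ + m_l²` with multiplicities `ν_l`). -/
noncomputable def prodKleinGordonOp {d : ℕ} (P : ℕ) (m : Fin P → ℝ) (ν : Fin P → ℕ) :
    (EuclideanSpace ℝ (Fin d) → ℂ) → (EuclideanSpace ℝ (Fin d) → ℂ) :=
  (List.ofFn fun l : Fin P => (kleinGordonOp (m l))^[ν l]).foldr (· ∘ ·) id

/-! Under the Fourier transform `−Δ + M²` becomes multiplication by `(2π)²‖ξ‖² + M²`. For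
`M ≠ 0` this symbol is bounded below by `M² > 0`, and both it and its reciprocal have temperate
growth, so `−Δ + M²` is a topological automorphism of `𝓢(ℝ^d, ℂ)`; hence so is every finite
composition of such operators. For an automorphism `D`, the equation `φ ∘ D = u` on `𝓢'` has the
unique solution `φ = u ∘ D⁻¹`. -/

open scoped SchwartzMap Laplacian LineDeriv Real

section KleinGordonSymbol

variable {E : Type*} [NormedAddCommGroup E] {M : ℝ}

/-- The factor `2π` comes from Mathlib's normalisation `𝓕 f ξ = ∫ e^{-2πi⟪x, ξ⟫} f x dx`. -/
noncomputable def kleinGordonSymbol (M : ℝ) (ξ : E) : ℝ := (2 * π) ^ 2 * ‖ξ‖ ^ 2 + M ^ 2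

theorem kleinGordonSymbol_pos (hM : M ≠ 0) (ξ : E) : 0 < kleinGordonSymbol M ξ := by
  unfold kleinGordonSymbol
  positivity

variable [InnerProductSpace ℝ E]

theorem hasTemperateGrowth_kleinGordonSymbol (M : ℝ) :
    (kleinGordonSymbol M : E → ℝ).HasTemperateGrowth := by
  unfold kleinGordonSymbol
  fun_prop

/-- The reciprocal is a rescaled Bessel potential `M⁻² (1 + ‖(2π/M) ξ‖²)⁻¹`. -/
theorem hasTemperateGrowth_kleinGordonSymbol_inv (hM : M ≠ 0) :
    (kleinGordonSymbol M : E → ℝ)⁻¹.HasTemperateGrowth := by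
  have bessel_form : (kleinGordonSymbol M : E → ℝ)⁻¹ =
      fun ξ => (M ^ 2)⁻¹ * (1 + ‖(2 * π / M) • ξ‖ ^ 2) ^ (-1 : ℝ) := by
    ext ξ
    rw [Pi.inv_apply, Real.rpow_neg_one, kleinGordonSymbol, norm_smul, Real.norm_eq_abs,
      mul_pow |_|, sq_abs, ← mul_inv]
    congr 1
    field_simp
    ring
  rw [bessel_form]
  exact (Function.HasTemperateGrowth.const _).mul
    ((Function.hasTemperateGrowth_one_add_norm_sq_rpow E (-1)).comp
      ((2 * π / M) • ContinuousLinearMap.id ℝ E).hasTemperateGrowth)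

theorem hasTemperateGrowth_ofReal_kleinGordonSymbol (M : ℝ) :
    (fun ξ : E => (kleinGordonSymbol M ξ : ℂ)).HasTemperateGrowth :=
  Function.Complex.hasTemperateGrowth_ofReal.comp (hasTemperateGrowth_kleinGordonSymbol M)

theorem hasTemperateGrowth_ofReal_kleinGordonSymbol_inv (hM : M ≠ 0) :
    (fun ξ : E => (kleinGordonSymbol M ξ : ℂ))⁻¹.HasTemperateGrowth := by
  have h : (fun ξ : E => (kleinGordonSymbol M ξ : ℂ))⁻¹ =
      Complex.ofReal ∘ (kleinGordonSymbol M)⁻¹ := by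
    ext ξ
    simp
  rw [h]
  exact Function.Complex.hasTemperateGrowth_ofReal.comp
    (hasTemperateGrowth_kleinGordonSymbol_inv hM)

end KleinGordonSymbol

namespace SchwartzMap

variable {𝕜 E F : Type*} [RCLike 𝕜] [NormedAddCommGroup E] [InnerProductSpace ℝ E]
  [FiniteDimensional ℝ E] [MeasurableSpace E] [BorelSpace E] [NormedAddCommGroup F]
  [NormedSpace ℂ F] [NormedSpace 𝕜 F] [SMulCommClass ℂ 𝕜 F]

theorem fourierMultiplierCLM_add {g₁ g₂ : E → 𝕜} (hg₁ : g₁.HasTemperateGrowth)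
    (hg₂ : g₂.HasTemperateGrowth) :
    fourierMultiplierCLM F (g₁ + g₂) = fourierMultiplierCLM F g₁ + fourierMultiplierCLM F g₂ := by
  simp only [fourierMultiplierCLM, smulLeftCLM_add hg₁ hg₂, ContinuousLinearMap.add_comp,
    ContinuousLinearMap.comp_add]

variable [CompleteSpace F]

noncomputable def fourierMultiplierCLE {g : E → 𝕜} (hg : g.HasTemperateGrowth)
    (hg_inv : g⁻¹.HasTemperateGrowth) (hg0 : ∀ ξ, g ξ ≠ 0) : 𝓢(E, F) ≃L[𝕜] 𝓢(E, F) :=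
  .equivOfInverse (fourierMultiplierCLM F g) (fourierMultiplierCLM F g⁻¹)
    (fun f => by
      rw [fourierMultiplierCLM_fourierMultiplierCLM_apply hg_inv hg,
        show g⁻¹ * g = fun _ => 1 from funext fun ξ => inv_mul_cancel₀ (hg0 ξ),
        fourierMultiplierCLM_const, one_smul, ContinuousLinearMap.id_apply])
    (fun f => by
      rw [fourierMultiplierCLM_fourierMultiplierCLM_apply hg hg_inv,
        show g * g⁻¹ = fun _ => 1 from funext fun ξ => mul_inv_cancel₀ (hg0 ξ),
        fourierMultiplierCLM_const, one_smul, ContinuousLinearMap.id_apply])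

theorem fourierMultiplierCLE_apply {g : E → 𝕜} (hg : g.HasTemperateGrowth)
    (hg_inv : g⁻¹.HasTemperateGrowth) (hg0 : ∀ ξ, g ξ ≠ 0) (f : 𝓢(E, F)) :
    fourierMultiplierCLE hg hg_inv hg0 f = fourierMultiplierCLM F g f :=
  rfl

theorem fourierMultiplierCLM_kleinGordonSymbol (M : ℝ) (f : 𝓢(E, F)) :
    fourierMultiplierCLM F (fun ξ => (kleinGordonSymbol M ξ : ℂ)) f = (M : ℂ) ^ 2 • f - Δ f := by
  have hsymb : kleinGordonSymbol M = (2 * π) ^ 2 • (‖·‖ ^ 2) + fun _ : E => M ^ 2 := rfl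
  refine (fourierMultiplierCLM_ofReal ℂ (hasTemperateGrowth_kleinGordonSymbol M) f).trans ?_
  rw [laplacian_eq_fourierMultiplierCLM, hsymb,
    fourierMultiplierCLM_add (by fun_prop) (by fun_prop), fourierMultiplierCLM_smul (by fun_prop),
    fourierMultiplierCLM_const]
  simp only [add_apply, smul_apply, ContinuousLinearMap.id_apply]
  rw [← Complex.ofReal_pow, Complex.coe_smul]
  module

variable {M : ℝ}

noncomputable def kleinGordonCLE (hM : M ≠ 0) : 𝓢(E, F) ≃L[ℂ] 𝓢(E, F) :=
  fourierMultiplierCLE (hasTemperateGrowth_ofReal_kleinGordonSymbol M)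
    (hasTemperateGrowth_ofReal_kleinGordonSymbol_inv hM)
    (fun ξ => Complex.ofReal_ne_zero.2 (kleinGordonSymbol_pos hM ξ).ne')

theorem kleinGordonCLE_apply (hM : M ≠ 0) (f : 𝓢(E, F)) :
    kleinGordonCLE hM f = (M : ℂ) ^ 2 • f - Δ f :=
  (fourierMultiplierCLE_apply _ _ _ f).trans (fourierMultiplierCLM_kleinGordonSymbol M f)

end SchwartzMap

section IsSchwartzAutomorphism

variable {E F : Type*} [NormedAddCommGroup E] [NormedSpace ℝ E] [NormedAddCommGroup F]
  [NormedSpace ℂ F]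

def IsSchwartzAutomorphism (T : (E → F) → (E → F)) : Prop :=
  ∃ e : 𝓢(E, F) ≃L[ℂ] 𝓢(E, F), ∀ f, ⇑(e f) = T ⇑f

namespace IsSchwartzAutomorphism

variable {S T : (E → F) → (E → F)}

theorem id : IsSchwartzAutomorphism (id : (E → F) → (E → F)) :=
  ⟨.refl ℂ _, fun _ => rfl⟩

theorem comp (hS : IsSchwartzAutomorphism S) (hT : IsSchwartzAutomorphism T) :
    IsSchwartzAutomorphism (S ∘ T) := by
  obtain ⟨eS, hS⟩ := hS
  obtain ⟨eT, hT⟩ := hT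
  exact ⟨eT.trans eS, fun f => by simp [hS, hT]⟩

theorem iterate (hT : IsSchwartzAutomorphism T) : ∀ n : ℕ, IsSchwartzAutomorphism T^[n]
  | 0 => id
  | n + 1 => by
    rw [Function.iterate_succ]
    exact (hT.iterate n).comp hT

theorem list_foldr_comp {l : List ((E → F) → (E → F))}
    (hl : ∀ T ∈ l, IsSchwartzAutomorphism T) :
    IsSchwartzAutomorphism (l.foldr (· ∘ ·) _root_.id) := by
  induction l with
  | nil => exact id
  | cons T l ih =>
    rw [List.forall_mem_cons] at hl
    exact hl.1.comp (ih hl.2)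

theorem existsUnique_dual_solution (hT : IsSchwartzAutomorphism T) (u : 𝓢(E, F) →L[ℂ] ℂ) :
    ∃! φ : 𝓢(E, F) →L[ℂ] ℂ, ∀ f g : 𝓢(E, F), ⇑g = T ⇑f → φ g = u f := by
  obtain ⟨e, he⟩ := hT
  have solves (f g : 𝓢(E, F)) : ⇑g = T ⇑f ↔ g = e f := by
    rw [← he, DFunLike.coe_fn_eq]
  refine ⟨u.comp e.symm.toContinuousLinearMap, fun f g hg => ?_, fun φ hφ => ?_⟩
  · simp [(solves f g).1 hg]
  · ext g
    simpa using hφ (e.symm g) g ((solves _ _).2 (e.apply_symm_apply g).symm)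

end IsSchwartzAutomorphism

end IsSchwartzAutomorphism

section Euclidean

variable {d : ℕ}

theorem pderiv_coe_schwartzMap (i : Fin d) (f : 𝓢(EuclideanSpace ℝ (Fin d), ℂ)) :
    pderiv i ⇑f = ⇑(∂_{EuclideanSpace.single i (1 : ℝ)} f : 𝓢(EuclideanSpace ℝ (Fin d), ℂ)) :=
  funext fun x => (SchwartzMap.lineDerivOp_apply_eq_fderiv _ f x).symm

theorem laplacian_coe_schwartzMap (f : 𝓢(EuclideanSpace ℝ (Fin d), ℂ)) :
    laplacian ⇑f = ⇑(Δ f : 𝓢(EuclideanSpace ℝ (Fin d), ℂ)) := by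
  classical
  ext x
  simp only [laplacian, pderiv_coe_schwartzMap,
    SchwartzMap.laplacian_eq_sum (EuclideanSpace.basisFun (Fin d) ℝ),
    EuclideanSpace.basisFun_apply, sum_apply]

theorem kleinGordonOp_coe_schwartzMap (M : ℝ) (f : 𝓢(EuclideanSpace ℝ (Fin d), ℂ)) :
    kleinGordonOp M ⇑f = ⇑((M : ℂ) ^ 2 • f - Δ f) := by
  ext x
  simp only [kleinGordonOp, laplacian_coe_schwartzMap, sub_apply, smul_apply, smul_eq_mul]
  ring

theorem isSchwartzAutomorphism_kleinGordonOp {M : ℝ} (hM : M ≠ 0) :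
    IsSchwartzAutomorphism (kleinGordonOp (d := d) M) :=
  ⟨SchwartzMap.kleinGordonCLE hM, fun f => by
    rw [SchwartzMap.kleinGordonCLE_apply, kleinGordonOp_coe_schwartzMap]⟩

theorem isSchwartzAutomorphism_prodKleinGordonOp {P : ℕ} {m : Fin P → ℝ} (hm : ∀ l, m l ≠ 0)
    (ν : Fin P → ℕ) : IsSchwartzAutomorphism (prodKleinGordonOp (d := d) P m ν) := by
  refine IsSchwartzAutomorphism.list_foldr_comp fun T hT => ?_
  obtain ⟨l, rfl⟩ := List.mem_ofFn.1 hT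
  exact (isSchwartzAutomorphism_kleinGordonOp (hm l)).iterate (ν l)

end Euclidean

theorem existsUnique_tempered_solution_general
    (d : ℕ) (P : ℕ)
    (m : Fin P → ℝ) (hm : ∀ l, 0 < m l) (ν : Fin P → ℕ)
    (u : SchwartzMap (EuclideanSpace ℝ (Fin d)) ℂ →L[ℂ] ℂ) :
    ∃! φ : SchwartzMap (EuclideanSpace ℝ (Fin d)) ℂ →L[ℂ] ℂ,
      ∀ f g : SchwartzMap (EuclideanSpace ℝ (Fin d)) ℂ,
        ⇑g = prodKleinGordonOp P m ν ⇑f → φ g = u f :=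
  (isSchwartzAutomorphism_prodKleinGordonOp (fun l => (hm l).ne') ν).existsUnique_dual_solution u

/-- **Unique solvability of `∏_l (−Δ + m_l²)^{ν_l} φ = u` in tempered distributions.**
For every tempered distribution `u` there is a unique tempered distribution `φ` such that
`φ(∏_l (−Δ + m_l²)^{ν_l} f) = u(f)` for every Schwartz function `f` (the equation is read via
duality: `g` ranges over the Schwartz representatives of `∏_l (−Δ + m_l²)^{ν_l} f`). -/
theorem existsUnique_tempered_solution
    (d : ℕ) (hd : 1 ≤ d) (P : ℕ) (hP : 1 ≤ P)
    (m : Fin P → ℝ) (hm : ∀ l, 0 < m l) (ν : Fin P → ℕ)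
    (u : SchwartzMap (EuclideanSpace ℝ (Fin d)) ℂ →L[ℂ] ℂ) :
    ∃! φ : SchwartzMap (EuclideanSpace ℝ (Fin d)) ℂ →L[ℂ] ℂ,
      ∀ f g : SchwartzMap (EuclideanSpace ℝ (Fin d)) ℂ,
        ⇑g = prodKleinGordonOp P m ν ⇑f → φ g = u f :=
  existsUnique_tempered_solution_general d P m hm ν u
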